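/- arXiv:1702.03566 — 3 statements merged into one kernel-verified Lean document; each statement's English description precedes it below -/
import Mathlib

section
/- Let P be a special perfect-tree forcing notion. If S, T ∈ P are not almost disjoint, then S and T are comparable: S ⊆ T or T ⊆ S. Moreover, every special perfect-tree forcing notion is regular. -/
noncomputable section

/-- Finite binary strings. -/
abbrev Str : Type := List Bool

/-- Points of Cantor space `2^ω`. -/
abbrev Pt : Type := ℕ → Bool

/-- The length-`n` initial segment of a point of Cantor space, as a string. -/
def seg (a : Pt) (n : ℕ) : Str := (List.range n).map a

/-- A tree: a set of strings closed under initial segments. -/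
def IsTree (T : Set Str) : Prop := ∀ ⦃s t : Str⦄, s <+: t → t ∈ T → s ∈ T

/-- A perfect tree: a nonempty tree in which every string has two
incomparable extensions inside the tree. -/
def IsPerfectTree (T : Set Str) : Prop :=
  T.Nonempty ∧ IsTree T ∧
    ∀ s ∈ T, ∃ t₁ t₂, t₁ ∈ T ∧ t₂ ∈ T ∧ s <+: t₁ ∧ s <+: t₂ ∧ ¬ t₁ <+: t₂ ∧ ¬ t₂ <+: t₁

/-- The restriction `T↾s = {t ∈ T : s ⊆ t or t ⊆ s}`. -/
def Tres (T : Set Str) (s : Str) : Set Str := {t ∈ T | s <+: t ∨ t <+: s}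

/-- The set `[T]` of branches of a tree `T`. -/
def branches (T : Set Str) : Set Pt := {a | ∀ n, seg a n ∈ T}

/-- `s` is the stem (root) of `T`: the longest `s ∈ T` with `T = T↾s`. -/
def IsStem (T : Set Str) (s : Str) : Prop :=
  s ∈ T ∧ T = Tres T s ∧ ∀ t ∈ T, T = Tres T t → t <+: s

open Classical in
/-- The stem `root(T)` of a tree (junk value `[]` if there is none). -/
def stem (T : Set Str) : Str := if h : ∃ s, IsStem T s then h.choose else []

/-- Simple splitting `T→i = T↾(root(T)⌢i)`. -/
def splitOne (T : Set Str) (i : Bool) : Set Str := Tres T (stem T ++ [i])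

/-- Iterated splitting `T→u`. -/
def splitIter (T : Set Str) (u : Str) : Set Str := u.foldl splitOne T

/-- Almost disjointness of trees: finite intersection. -/
def AD (S T : Set Str) : Prop := (S ∩ T).Finite

/-- A perfect-tree forcing notion: a nonempty set of perfect trees closed
under restrictions. -/
def IsPTF (P : Set (Set Str)) : Prop :=
  P.Nonempty ∧ (∀ T ∈ P, IsPerfectTree T) ∧ ∀ T ∈ P, ∀ s ∈ T, Tres T s ∈ P

/-- `A` is relatively clopen in `B` (as a subspace of Cantor space). -/
def ClopenIn (A B : Set Pt) : Prop := IsClopen ((fun x : B => (x : Pt)) ⁻¹' A)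

/-- `A` is relatively open in `B` (as a subspace of Cantor space). -/
def OpenIn (A B : Set Pt) : Prop := IsOpen ((fun x : B => (x : Pt)) ⁻¹' A)

/-- A special perfect-tree forcing notion: `P = {T↾s : s ∈ T ∈ A}` for an
antichain (pairwise a.d. set) `A ⊆ P`. -/
def SpecialPTF (P : Set (Set Str)) : Prop :=
  ∃ A ⊆ P, A.Pairwise AD ∧ P = {R | ∃ T ∈ A, ∃ s ∈ T, R = Tres T s}

/-- A regular perfect-tree forcing notion: `[S] ∩ [T]` is relatively clopen
in `[S]` or in `[T]`, for all `S, T ∈ P`. -/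
def RegularPTF (P : Set (Set Str)) : Prop :=
  ∀ S ∈ P, ∀ T ∈ P,
    ClopenIn (branches S ∩ branches T) (branches S) ∨
    ClopenIn (branches S ∩ branches T) (branches T)

/-- `T ⊆ᶠ ⋃ D`: `[T]` is covered by finitely many `[S]`, `S ∈ D`. -/
def SqFin (T : Set Str) (D : Set (Set Str)) : Prop :=
  ∃ D' ⊆ D, D'.Finite ∧ branches T ⊆ ⋃ S ∈ D', branches S

/-- `P ⊑ Q`: `Q` is a refinement of `P`. -/
def Refines (P Q : Set (Set Str)) : Prop :=
  (∀ T ∈ P, ∃ S ∈ Q, S ⊆ T) ∧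
  (∀ S ∈ Q, SqFin S P) ∧
  (∀ S ∈ Q, ∀ T ∈ P, ClopenIn (branches S ∩ branches T) (branches S) ∧ ¬ T ⊆ S)

/-- `D` is dense in `P`. -/
def DenseIn (D P : Set (Set Str)) : Prop := ∀ T ∈ P, ∃ S ∈ D, S ⊆ T

/-- `D` is pre-dense in `P`. -/
def PreDenseIn (D P : Set (Set Str)) : Prop :=
  DenseIn {T ∈ P | ∃ S ∈ D, T ⊆ S} P

/-- `P ⊑_D Q`: `Q` locks `D` over `P`. -/
def Locks (P D Q : Set (Set Str)) : Prop :=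
  Refines P Q ∧ ∀ S ∈ Q, SqFin S D

/-- A finite splitting system of height `n` over `P`. -/
def IsFSS (P : Set (Set Str)) (n : ℕ) (φ : Str → Set Str) : Prop :=
  (∀ s : Str, s.length ≤ n → φ s ∈ P) ∧
  ∀ (s : Str) (i : Bool), s.length < n → φ (s ++ [i]) ⊆ splitOne (φ s) i

/-!
Every member of a special forcing is a restriction `T↾s` of a tree `T` of the antichain.
Restrictions of two different antichain trees are almost disjoint, and two restrictions `T↾s`,
`T↾t` of the same tree are nested when `s`, `t` are comparable and almost disjoint otherwise.
Regularity follows, since `[S] ∩ [T]` is then empty, `[S]` or `[T]`.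
-/

lemma Tres_subset (T : Set Str) (s : Str) : Tres T s ⊆ T := fun _ ht => ht.1

lemma Tres_anti (T : Set Str) {s₁ s₂ : Str} (h : s₁ <+: s₂) : Tres T s₂ ⊆ Tres T s₁ := by
  rintro t ⟨htT, ht | ht⟩
  · exact ⟨htT, Or.inl (h.trans ht)⟩
  · exact ⟨htT, (List.prefix_or_prefix_of_prefix ht h).symm⟩

lemma finite_setOf_prefix (s : Str) : {t : Str | t <+: s}.Finite :=
  s.inits.toFinset.finite_toSet.subset fun t ht => by simpa using ht

lemma AD_Tres_of_not_prefix (T : Set Str) {s₁ s₂ : Str} (h : ¬ (s₁ <+: s₂ ∨ s₂ <+: s₁)) :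
    AD (Tres T s₁) (Tres T s₂) := by
  refine ((finite_setOf_prefix s₁).union (finite_setOf_prefix s₂)).subset ?_
  rintro t ⟨⟨-, h₁ | h₁⟩, ⟨-, h₂ | h₂⟩⟩
  · exact absurd (List.prefix_or_prefix_of_prefix h₁ h₂) h
  · exact Or.inr h₂
  · exact Or.inl h₁
  · exact Or.inl h₁

lemma AD.mono {S T S' T' : Set Str} (h : AD S T) (hS : S' ⊆ S) (hT : T' ⊆ T) : AD S' T' :=
  Set.Finite.subset h (Set.inter_subset_inter hS hT)

lemma seg_injective (a : Pt) : Function.Injective (seg a) := fun m n hmn => by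
  simpa [seg] using congrArg List.length hmn

lemma branches_mono {S T : Set Str} (h : S ⊆ T) : branches S ⊆ branches T :=
  fun _ ha n => h (ha n)

/-- A common branch of `S` and `T` runs through infinitely many strings of `S ∩ T`. -/
lemma AD.branches_inter_eq_empty {S T : Set Str} (h : AD S T) :
    branches S ∩ branches T = ∅ := by
  refine Set.eq_empty_of_forall_notMem fun a ⟨haS, haT⟩ => ?_
  exact Set.infinite_range_of_injective (seg_injective a)
    (h.subset (Set.range_subset_iff.2 fun n => ⟨haS n, haT n⟩))

lemma clopenIn_empty (B : Set Pt) : ClopenIn ∅ B := by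
  simp only [ClopenIn, Set.preimage_empty, isClopen_empty]

lemma clopenIn_of_subset {A B : Set Pt} (h : B ⊆ A) : ClopenIn A B := by
  rw [ClopenIn, Set.preimage_eq_univ_iff.2 fun _ ⟨x, hx⟩ => hx ▸ h x.2]
  exact isClopen_univ

lemma SpecialPTF.subset_or_subset_of_not_AD {P : Set (Set Str)} (hsp : SpecialPTF P)
    {S T : Set Str} (hS : S ∈ P) (hT : T ∈ P) (hST : ¬ AD S T) : S ⊆ T ∨ T ⊆ S := by
  obtain ⟨A, -, hA, rfl⟩ := hsp
  obtain ⟨R₁, hR₁, s₁, -, rfl⟩ := hS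
  obtain ⟨R₂, hR₂, s₂, -, rfl⟩ := hT
  obtain rfl : R₁ = R₂ := by
    by_contra hne
    exact hST ((hA hR₁ hR₂ hne).mono (Tres_subset _ _) (Tres_subset _ _))
  have hcomp : s₁ <+: s₂ ∨ s₂ <+: s₁ := by
    by_contra h
    exact hST (AD_Tres_of_not_prefix R₁ h)
  exact hcomp.symm.imp (Tres_anti R₁) (Tres_anti R₁)

lemma regularPTF_of_subset_or_subset {P : Set (Set Str)}
    (h : ∀ S ∈ P, ∀ T ∈ P, ¬ AD S T → S ⊆ T ∨ T ⊆ S) : RegularPTF P := by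
  intro S hS T hT
  by_cases hST : AD S T
  · exact Or.inl (hST.branches_inter_eq_empty ▸ clopenIn_empty _)
  · rcases h S hS T hT hST with h | h
    · exact Or.inl (clopenIn_of_subset fun _ ha => ⟨ha, branches_mono h ha⟩)
    · exact Or.inr (clopenIn_of_subset fun _ ha => ⟨branches_mono h ha, ha⟩)

theorem stmt6_general (P : Set (Set Str)) (hsp : SpecialPTF P) :
    (∀ S ∈ P, ∀ T ∈ P, ¬ AD S T → S ⊆ T ∨ T ⊆ S) ∧ RegularPTF P := by
  have hcomp : ∀ S ∈ P, ∀ T ∈ P, ¬ AD S T → S ⊆ T ∨ T ⊆ S :=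
    fun _ hS _ hT => hsp.subset_or_subset_of_not_AD hS hT
  exact ⟨hcomp, regularPTF_of_subset_or_subset hcomp⟩

/-- Lemma 2.7 (regfn), first part: in a special perfect-tree forcing notion,
non-a.d. trees are comparable; moreover every special forcing is regular. -/
theorem stmt6 (P : Set (Set Str)) (hP : IsPTF P) (hsp : SpecialPTF P) :
    (∀ S ∈ P, ∀ T ∈ P, ¬ AD S T → S ⊆ T ∨ T ⊆ S) ∧ RegularPTF P :=
  stmt6_general P hsp

end
end

section
/- Let P be a regular perfect-tree forcing notion. If S, T ∈ P are not almost disjoint, then they are compatible in P: there exists a tree R ∈ P with R ⊆ S ∩ T. -/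
noncomputable section

/-! `S ∩ T` is an infinite tree, so by compactness of Cantor space (König's lemma) `[S] ∩ [T]`
contains a branch `a`. By regularity we may assume `[S] ∩ [T]` is relatively open in `[S]`, so
every branch of `S` through some initial segment `a↾n` is a branch of `T`. Since `S` is perfect,
every node of `S↾(a↾n)` lies on such a branch, hence `S↾(a↾n) ⊆ S ∩ T`. -/

@[simp] lemma seg_length (a : Pt) (n : ℕ) : (seg a n).length = n := by simp [seg]

lemma seg_eq_take {a : Pt} {m n : ℕ} (h : m ≤ n) : seg a m = (seg a n).take m := by
  simp [seg, ← List.map_take, List.take_range, Nat.min_eq_left h]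

lemma seg_prefix_seg (a : Pt) {m n : ℕ} (h : m ≤ n) : seg a m <+: seg a n := by
  rw [seg_eq_take h]; exact List.take_prefix _ _

lemma seg_getD_eq_take (t : Str) {n : ℕ} (h : n ≤ t.length) :
    seg (fun i => t.getD i false) n = t.take n := by
  apply List.ext_getElem
  · simp [seg, h]
  · intro i hi _
    have hi : i < t.length := (by simpa [seg] using hi : i < n).trans_le h
    simp [seg, List.getElem?_eq_getElem hi]

lemma seg_eq_ofFn (a : Pt) (n : ℕ) : seg a n = List.ofFn (fun i : Fin n => a i) := by
  apply List.ext_getElem <;> simp [seg]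

lemma isClosed_setOf_seg_mem (D : Set Str) (n : ℕ) : IsClosed {a : Pt | seg a n ∈ D} := by
  simp only [seg_eq_ofFn]
  exact (isClosed_discrete {f : Fin n → Bool | List.ofFn f ∈ D}).preimage (by fun_prop)

lemma branches_inter (S T : Set Str) : branches (S ∩ T) = branches S ∩ branches T := by
  ext a; simp only [branches, Set.mem_inter_iff, Set.mem_ofPred_eq, forall_and]

lemma IsTree.inter {S T : Set Str} (hS : IsTree S) (hT : IsTree T) : IsTree (S ∩ T) :=
  fun _ _ hst ht => ⟨hS hst ht.1, hT hst ht.2⟩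

lemma exists_mem_branches_of_infinite {D : Set Str} (hD : IsTree D) {s : Str}
    (hs : {t ∈ D | s <+: t}.Infinite) : ∃ a ∈ branches D, seg a s.length = s := by
  let C : ℕ → Set Pt := fun n =>
    {a | seg a (s.length + n) ∈ D} ∩ {a | seg a s.length = s}
  have hC_anti : ∀ n, C (n + 1) ⊆ C n := fun n a ⟨ha, hs⟩ =>
    ⟨hD (seg_prefix_seg a (by omega)) ha, hs⟩
  have hC_ne : ∀ n, (C n).Nonempty := by
    intro n
    obtain ⟨t, ⟨htD, hst⟩, hlen⟩ :=
      (hs.sdiff (List.finite_length_lt Bool (s.length + n))).nonempty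
    rw [Set.mem_ofPred_eq, not_lt] at hlen
    refine ⟨fun i => t.getD i false, ?_, ?_⟩
    · simpa only [Set.mem_ofPred_eq, seg_getD_eq_take t hlen] using hD (List.take_prefix _ _) htD
    · simpa only [Set.mem_ofPred_eq, seg_getD_eq_take t hst.length_le]
        using (List.prefix_iff_eq_take.mp hst).symm
  have hC_closed : ∀ n, IsClosed (C n) := fun n =>
    (isClosed_setOf_seg_mem D _).inter (isClosed_setOf_seg_mem {s} _)
  obtain ⟨a, ha⟩ := IsCompact.nonempty_iInter_of_sequence_nonempty_isCompact_isClosed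
    C hC_anti hC_ne (hC_closed 0).isCompact hC_closed
  rw [Set.mem_iInter] at ha
  exact ⟨a, fun m => hD (seg_prefix_seg a (Nat.le_add_left m _)) (ha m).1, (ha 0).2⟩

lemma IsTree.branches_nonempty_of_infinite {D : Set Str} (hD : IsTree D) (hinf : D.Infinite) :
    (branches D).Nonempty := by
  obtain ⟨a, ha, -⟩ := exists_mem_branches_of_infinite (s := []) hD (by simpa using hinf)
  exact ⟨a, ha⟩

lemma IsPerfectTree.exists_longer {T : Set Str} (hT : IsPerfectTree T) {s : Str} (hs : s ∈ T) :
    ∃ t ∈ T, s <+: t ∧ s.length < t.length := by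
  obtain ⟨t₁, t₂, ht₁, ht₂, hst₁, hst₂, h₁₂, -⟩ := hT.2.2 s hs
  by_contra! hlong
  have e₁ := hst₁.eq_of_length (le_antisymm hst₁.length_le (hlong t₁ ht₁ hst₁))
  have e₂ := hst₂.eq_of_length (le_antisymm hst₂.length_le (hlong t₂ ht₂ hst₂))
  exact h₁₂ (e₁ ▸ e₂ ▸ List.prefix_refl s)

lemma IsPerfectTree.infinite_extensions {T : Set Str} (hT : IsPerfectTree T) {s : Str}
    (hs : s ∈ T) : {t ∈ T | s <+: t}.Infinite := by
  intro hfin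
  obtain ⟨m, ⟨hmT, hsm⟩, hmax⟩ := hfin.exists_maximalFor List.length _ ⟨s, hs, List.prefix_refl s⟩
  obtain ⟨t, htT, hmt, hlen⟩ := hT.exists_longer hmT
  exact hlen.not_ge (hmax ⟨htT, hsm.trans hmt⟩ hlen.le)

lemma IsPerfectTree.exists_mem_branches {T : Set Str} (hT : IsPerfectTree T) {s : Str}
    (hs : s ∈ T) : ∃ a ∈ branches T, seg a s.length = s :=
  exists_mem_branches_of_infinite hT.2.1 (hT.infinite_extensions hs)

lemma OpenIn.exists_seg {A B : Set Pt} (h : OpenIn A B) {a : Pt} (haB : a ∈ B) (haA : a ∈ A) :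
    ∃ n, ∀ b ∈ B, seg b n = seg a n → b ∈ A := by
  obtain ⟨V, hV, hVA⟩ := isOpen_induced_iff.mp h
  have haV : a ∈ V := (Set.ext_iff.mp hVA ⟨a, haB⟩).mpr haA
  obtain ⟨I, u, hu, hIV⟩ := isOpen_pi_iff.mp hV a haV
  refine ⟨I.sup id + 1, fun b hbB hb => (Set.ext_iff.mp hVA ⟨b, hbB⟩).mp (hIV fun i hi => ?_)⟩
  have hi' : i < I.sup id + 1 := Nat.lt_succ_of_le (Finset.le_sup (f := id) hi)
  have hba : b i = a i := by simpa [seg, hi'] using congrArg (·[i]?) hb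
  simpa [hba] using (hu i hi).2

lemma IsPerfectTree.exists_seg_tres_subset_inter {S T : Set Str} (hS : IsPerfectTree S)
    (hT : IsTree T) {a : Pt} (haS : a ∈ branches S) (haT : a ∈ branches T)
    (h : OpenIn (branches S ∩ branches T) (branches S)) :
    ∃ n, Tres S (seg a n) ⊆ S ∩ T := by
  obtain ⟨n, hn⟩ := h.exists_seg haS ⟨haS, haT⟩
  refine ⟨n, fun t ⟨htS, hta⟩ => ⟨htS, ?_⟩⟩
  rcases hta with hat | hta
  · obtain ⟨b, hbS, hbt⟩ := hS.exists_mem_branches htS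
    have hba : seg b n = seg a n := by
      have hn_le : n ≤ t.length := by simpa using hat.length_le
      rw [seg_eq_take hn_le, hbt, List.prefix_iff_eq_take.mp hat, seg_length]
    simpa [hbt] using (hn b hbS hba).2 t.length
  · exact hT hta (haT n)

lemma IsPTF.exists_subset_inter_of_openIn {P : Set (Set Str)} (hP : IsPTF P) {S T : Set Str}
    (hS : S ∈ P) (hT : T ∈ P) {a : Pt} (haS : a ∈ branches S) (haT : a ∈ branches T)
    (h : OpenIn (branches S ∩ branches T) (branches S)) : ∃ R ∈ P, R ⊆ S ∩ T := by
  obtain ⟨n, hn⟩ := (hP.2.1 S hS).exists_seg_tres_subset_inter (hP.2.1 T hT).2.1 haS haT h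
  exact ⟨_, hP.2.2 S hS _ (haS n), hn⟩

/-- Lemma 2.7 (regfn) (1): in a regular perfect-tree forcing notion, trees
that are not almost disjoint are compatible. -/
theorem stmt7 (P : Set (Set Str)) (hP : IsPTF P) (hreg : RegularPTF P)
    (S T : Set Str) (hS : S ∈ P) (hT : T ∈ P) (h : ¬ AD S T) :
    ∃ R ∈ P, R ⊆ S ∩ T := by
  obtain ⟨a, haS, haT⟩ : (branches S ∩ branches T).Nonempty := by
    rw [← branches_inter]
    exact ((hP.2.1 S hS).2.1.inter (hP.2.1 T hT).2.1).branches_nonempty_of_infinite h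
  rcases hreg S hS T hT with hclopen | hclopen
  · exact hP.exists_subset_inter_of_openIn hS hT haS haT hclopen.isOpen
  · rw [Set.inter_comm] at hclopen ⊢
    exact hP.exists_subset_inter_of_openIn hT hS haT haS hclopen.isOpen

end
end

section
/- Let D ⊆ P where P, Q, R are perfect-tree forcing notions. (a) If P ⊑_D Q and Q ⊑ R, then P ⊑_D R. (b) If ⟨P_α⟩_{α<λ} is a ⊑-increasing sequence of perfect-tree forcing notions, 0 < μ < λ, P = ⋃_{α<μ} P_α, and P ⊑_D P_μ, then P ⊑_D ⋃_{μ≤α<λ} P_α. -/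
noncomputable section

/-!
Both parts reduce to two facts: `⊑` is transitive, and a family of refinements of `P`
that all lock `D` (and is nonempty) has a union that still refines `P` and locks `D`.
Transitivity of the clopen clause (iii) is the only point needing an idea: if `[S]` is covered
by finitely many `[Q]`, `Q ∈ 𝐐`, then `[S] ∩ [T]` is the finite union of the pieces
`[S] ∩ [Q] ∩ [T]`, each clopen in `[S]` because `[S] ∩ [Q]` is clopen in `[S]` and
`[Q] ∩ [T]` is clopen in `[Q]`.
-/

theorem SqFin.trans {S : Set Str} {Q D : Set (Set Str)}
    (hS : SqFin S Q) (hQ : ∀ T ∈ Q, SqFin T D) : SqFin S D := by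
  obtain ⟨E, hEQ, hEfin, hcov⟩ := hS
  choose F hFD hFfin hFcov using fun T : E => hQ T (hEQ T.2)
  have := hEfin.to_subtype
  refine ⟨⋃ T : E, F T, Set.iUnion_subset hFD, Set.finite_iUnion hFfin, fun a ha => ?_⟩
  obtain ⟨T, hT, haT⟩ := Set.mem_iUnion₂.1 (hcov ha)
  obtain ⟨R, hR, haR⟩ := Set.mem_iUnion₂.1 (hFcov ⟨T, hT⟩ haT)
  exact Set.mem_biUnion (Set.mem_iUnion.2 ⟨⟨T, hT⟩, hR⟩) haR

section ClopenIn

variable {A B C : Set Pt}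

theorem clopenIn_iff_exists :
    ClopenIn A B ↔
      (∃ U, IsOpen U ∧ U ∩ B = A ∩ B) ∧ ∃ F, IsClosed F ∧ F ∩ B = A ∩ B := by
  have hval : ∀ X : Set Pt, ((↑) : B → Pt) ⁻¹' X = (↑) ⁻¹' A ↔ X ∩ B = A ∩ B := fun X => by
    rw [Subtype.preimage_coe_eq_preimage_coe_iff, Set.inter_comm B, Set.inter_comm B]
  simp only [ClopenIn, IsClopen, isClosed_induced_iff, isOpen_induced_iff, hval]
  exact and_comm

theorem ClopenIn.congr {A' : Set Pt} (hA : ClopenIn A B) (h : A ∩ B = A' ∩ B) :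
    ClopenIn A' B := by
  have hval : ((↑) : B → Pt) ⁻¹' A = (↑) ⁻¹' A' := by
    rwa [Subtype.preimage_coe_eq_preimage_coe_iff, Set.inter_comm B, Set.inter_comm B]
  unfold ClopenIn at hA ⊢
  rwa [← hval]

theorem inter_inter_eq_of_traces {α : Type*} {U V A B C : Set α}
    (hU : U ∩ A = A ∩ B ∩ A) (hV : V ∩ B = B ∩ C ∩ B) :
    U ∩ V ∩ A = A ∩ B ∩ C ∩ A := by
  ext x
  have hUx := congrArg (x ∈ ·) hU
  have hVx := congrArg (x ∈ ·) hV
  simp only [Set.mem_inter_iff, eq_iff_iff] at hUx hVx ⊢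
  tauto

theorem ClopenIn.inter_trans (hAB : ClopenIn (A ∩ B) A) (hBC : ClopenIn (B ∩ C) B) :
    ClopenIn (A ∩ B ∩ C) A := by
  obtain ⟨⟨U, hU, hUA⟩, F, hF, hFA⟩ := clopenIn_iff_exists.1 hAB
  obtain ⟨⟨V, hV, hVB⟩, G, hG, hGB⟩ := clopenIn_iff_exists.1 hBC
  exact clopenIn_iff_exists.2 ⟨⟨U ∩ V, hU.inter hV, inter_inter_eq_of_traces hUA hVB⟩,
    F ∩ G, hF.inter hG, inter_inter_eq_of_traces hFA hGB⟩

theorem ClopenIn.inter_of_finite_cover {ι : Type*} {E : Set ι} {Q : ι → Set Pt}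
    (hE : E.Finite) (hcov : A ⊆ ⋃ i ∈ E, Q i)
    (hAQ : ∀ i ∈ E, ClopenIn (A ∩ Q i) A) (hQC : ∀ i ∈ E, ClopenIn (Q i ∩ C) (Q i)) :
    ClopenIn (A ∩ C) A := by
  have hpieces : ClopenIn (⋃ i ∈ E, A ∩ Q i ∩ C) A := by
    unfold ClopenIn
    rw [Set.preimage_iUnion₂]
    exact hE.isClopen_biUnion fun i hi => (hAQ i hi).inter_trans (hQC i hi)
  refine hpieces.congr ?_
  ext x
  simp only [Set.mem_inter_iff, Set.mem_iUnion, exists_prop]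
  constructor
  · rintro ⟨⟨i, -, ⟨-, -⟩, hxC⟩, hxA⟩
    exact ⟨⟨hxA, hxC⟩, hxA⟩
  · rintro ⟨⟨hxA, hxC⟩, -⟩
    obtain ⟨i, hi, hxQ⟩ := Set.mem_iUnion₂.1 (hcov hxA)
    exact ⟨⟨i, hi, ⟨hxA, hxQ⟩, hxC⟩, hxA⟩

end ClopenIn

section Refines

variable {P Q R D : Set (Set Str)}

theorem Refines.trans (hPQ : Refines P Q) (hQR : Refines Q R) : Refines P R := by
  obtain ⟨hPQ_dense, hPQ_cover, hPQ_clopen⟩ := hPQ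
  obtain ⟨hQR_dense, hQR_cover, hQR_clopen⟩ := hQR
  refine ⟨fun T hT => ?_, fun S hS => (hQR_cover S hS).trans hPQ_cover, fun S hS T hT => ⟨?_, ?_⟩⟩
  · obtain ⟨S, hS, hST⟩ := hPQ_dense T hT
    obtain ⟨S', hS', hS'S⟩ := hQR_dense S hS
    exact ⟨S', hS', hS'S.trans hST⟩
  · obtain ⟨E, hEQ, hEfin, hcov⟩ := hQR_cover S hS
    exact ClopenIn.inter_of_finite_cover hEfin hcov
      (fun Q hQ => (hQR_clopen S hS Q (hEQ hQ)).1) (fun Q hQ => (hPQ_clopen Q (hEQ hQ) T hT).1)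
  · intro hTS
    obtain ⟨S', hS', hS'T⟩ := hPQ_dense T hT
    exact (hQR_clopen S hS S' hS').2 (hS'T.trans hTS)

theorem Locks.trans_refines (hPQ : Locks P D Q) (hQR : Refines Q R) : Locks P D R :=
  ⟨hPQ.1.trans hQR, fun S hS => (hQR.2.1 S hS).trans hPQ.2⟩

theorem Locks.biUnion {ι : Type*} {I : Set ι} {F : ι → Set (Set Str)} (hI : I.Nonempty)
    (h : ∀ i ∈ I, Locks P D (F i)) : Locks P D (⋃ i ∈ I, F i) := by
  obtain ⟨i₀, hi₀⟩ := hI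
  refine ⟨⟨fun T hT => ?_, fun S hS => ?_, fun S hS => ?_⟩, fun S hS => ?_⟩
  · obtain ⟨S, hS, hST⟩ := (h i₀ hi₀).1.1 T hT
    exact ⟨S, Set.mem_biUnion hi₀ hS, hST⟩
  all_goals
    obtain ⟨i, hi, hSi⟩ := Set.mem_iUnion₂.1 hS
  · exact (h i hi).1.2.1 S hSi
  · exact (h i hi).1.2.2 S hSi
  · exact (h i hi).2 S hSi

end Refines

/-- Lemma 3.5 (pqm) (2),(3): the locking relation `⊑_D` is preserved by
further refinements and by unions of `⊑`-increasing sequences. -/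
theorem stmt16 :
    (∀ P Q R D : Set (Set Str), IsPTF P → IsPTF Q → IsPTF R → D ⊆ P →
      Locks P D Q → Refines Q R → Locks P D R) ∧
    (∀ (l mu : Ordinal) (P : Ordinal → Set (Set Str)) (D : Set (Set Str)),
      (∀ a < l, IsPTF (P a)) →
      (∀ a b : Ordinal, a < b → b < l → Refines (P a) (P b)) →
      0 < mu → mu < l →
      D ⊆ (⋃ a ∈ Set.Iio mu, P a) →
      Locks (⋃ a ∈ Set.Iio mu, P a) D (P mu) →
      Locks (⋃ a ∈ Set.Iio mu, P a) D (⋃ a ∈ Set.Ico mu l, P a)) := by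
  refine ⟨fun P Q R D _ _ _ _ hPQ hQR => hPQ.trans_refines hQR, ?_⟩
  intro l mu P D _ hincr _ hmul _ hlock
  refine Locks.biUnion ⟨mu, le_rfl, hmul⟩ fun a ⟨hmua, hal⟩ => ?_
  rcases hmua.eq_or_lt with rfl | hlt
  · exact hlock
  · exact hlock.trans_refines (hincr mu a hlt hal)

end
end
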